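/- arXiv:1109.6179 — 2 statements merged into one kernel-verified Lean document; each statement's English description precedes it below -/
import Mathlib

section
/- Let S = C_1 ∪ ⋯ ∪ C_k where C_1,…,C_k ⊆ ℝ^d are nonempty polyhedra, and let L be a d-dimensional maximal S-free set. Then L is a polyhedron with at most k facets, and the relative interior of each facet of L contains a point of S. -/
open Set

section Poly

variable {V : Type*} [AddCommGroup V] [Module ℝ V]

/-- Polyhedron: finite intersection of halfspaces. -/
def MPoly (P : Set V) : Prop :=
  ∃ (M : ℕ) (a : Fin M → (V →ₗ[ℝ] ℝ)) (b : Fin M → ℝ), P = {x | ∀ m, a m x ≤ b m}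

lemma MPoly.of_fintype {ι : Type*} [Fintype ι] (a : ι → (V →ₗ[ℝ] ℝ)) (b : ι → ℝ) :
    MPoly {x : V | ∀ m, a m x ≤ b m} := by
  classical
  obtain ⟨e⟩ := Fintype.truncEquivFin ι
  refine ⟨Fintype.card ι, a ∘ e.symm, b ∘ e.symm, ?_⟩
  ext x
  constructor
  · intro h m; exact h _
  · intro h m; simpa using h (e m)

lemma MPoly.add_line {P : Set V} (hP : MPoly P) (v : V) :
    MPoly {y : V | ∃ t : ℝ, y + t • v ∈ P} := by
  classical
  obtain ⟨M, a, b, rfl⟩ := hP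
  set γ : Fin M → ℝ := fun m => a m v with hγ
  let A : (Fin M ⊕ Fin M × Fin M) → (V →ₗ[ℝ] ℝ) := fun j =>
    match j with
    | .inl m => if γ m = 0 then a m else 0
    | .inr (p, q) => if 0 < γ p ∧ γ q < 0 then γ p • a q - γ q • a p else 0
  let B : (Fin M ⊕ Fin M × Fin M) → ℝ := fun j =>
    match j with
    | .inl m => if γ m = 0 then b m else 0
    | .inr (p, q) => if 0 < γ p ∧ γ q < 0 then γ p * b q - γ q * b p else 0
  have hset : {y : V | ∃ t : ℝ, y + t • v ∈ {x | ∀ m, a m x ≤ b m}}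
      = {x | ∀ j, A j x ≤ B j} := by
    ext y
    simp only [mem_setOf_eq]
    constructor
    · rintro ⟨t, ht⟩ j
      have hm : ∀ m, a m y + t * γ m ≤ b m := by
        intro m
        have := ht m
        simpa [map_add, map_smul, smul_eq_mul, hγ, mul_comm] using this
      match j with
      | .inl m =>
        by_cases h0 : γ m = 0
        · have := hm m
          simp only [A, B, h0, if_pos]
          rw [h0] at this; linarith
        · simp [A, B, h0]
      | .inr (p, q) =>
        by_cases hc : 0 < γ p ∧ γ q < 0
        · obtain ⟨hp, hq⟩ := hc
          simp only [A, B, if_pos (⟨hp, hq⟩ : 0 < γ p ∧ γ q < 0), LinearMap.sub_apply,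
            LinearMap.smul_apply, smul_eq_mul]
          have h1 := hm q
          have h2 := hm p
          nlinarith [mul_le_mul_of_nonneg_left h1 (le_of_lt hp),
            mul_le_mul_of_nonneg_left h2 (le_of_lt (neg_pos.mpr hq))]
        · simp [A, B, hc]
    · intro hy
      -- choose t in the interval
      have hzero : ∀ m, γ m = 0 → a m y ≤ b m := by
        intro m h0
        have := hy (.inl m)
        simpa [A, B, h0] using this
      have hpair : ∀ p q, 0 < γ p → γ q < 0 →
          (b q - a q y) / γ q ≤ (b p - a p y) / γ p := by
        intro p q hp hq
        have hc := hy (.inr (p, q))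
        simp only [A, B, if_pos (⟨hp, hq⟩ : 0 < γ p ∧ γ q < 0), LinearMap.sub_apply,
          LinearMap.smul_apply, smul_eq_mul] at hc
        have hrw : (b q - a q y) / γ q = (-(b q - a q y)) / (-(γ q)) := by
          rw [neg_div_neg_eq]
        rw [hrw, div_le_div_iff₀ (by linarith) hp]
        nlinarith
      classical
      set Neg : Finset (Fin M) := Finset.univ.filter (fun m => γ m < 0) with hNegdef
      set Pos : Finset (Fin M) := Finset.univ.filter (fun m => 0 < γ m) with hPosdef
      have main : ∀ t : ℝ,
          (∀ p ∈ Pos, t ≤ (b p - a p y) / γ p) →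
          (∀ q ∈ Neg, (b q - a q y) / γ q ≤ t) →
          y + t • v ∈ {x | ∀ m, a m x ≤ b m} := by
        intro t hup hlo m
        have hval : a m (y + t • v) = a m y + t * γ m := by
          simp [map_add, map_smul, smul_eq_mul, hγ, mul_comm]
        show a m (y + t • v) ≤ b m
        rw [hval]
        rcases lt_trichotomy (γ m) 0 with h | h | h
        · have := hlo m (by simp [hNegdef, h])
          rw [div_le_iff_of_neg h] at this
          linarith
        · rw [h]; simpa using hzero m h
        · have := hup m (by simp [hPosdef, h])
          rw [le_div_iff₀ h] at this
          linarith
      by_cases hNe : Neg.Nonempty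
      · refine ⟨Neg.sup' hNe (fun q => (b q - a q y) / γ q), main _ ?_ ?_⟩
        · intro p hp
          refine Finset.sup'_le _ _ ?_
          intro q hq
          exact hpair p q (by simpa [hPosdef] using hp) (by simpa [hNegdef] using hq)
        · intro q hq
          exact Finset.le_sup' (fun q => (b q - a q y) / γ q) hq
      · by_cases hPo : Pos.Nonempty
        · refine ⟨Pos.inf' hPo (fun p => (b p - a p y) / γ p), main _ ?_ ?_⟩
          · intro p hp; exact Finset.inf'_le _ hp
          · intro q hq; exact absurd ⟨q, hq⟩ hNe
        · refine ⟨0, main 0 ?_ ?_⟩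
          · intro p hp; exact absurd ⟨p, hp⟩ hPo
          · intro q hq; exact absurd ⟨q, hq⟩ hNe
  rw [hset]
  exact MPoly.of_fintype A B

lemma MPoly.add_span_list (l : List V) {P : Set V} (hP : MPoly P) :
    MPoly {x : V | ∃ p ∈ P, ∃ y ∈ Submodule.span ℝ {v : V | v ∈ l}, x = p + y} := by
  induction l generalizing P with
  | nil =>
    have : {x : V | ∃ p ∈ P, ∃ y ∈ Submodule.span ℝ {v : V | v ∈ ([] : List V)}, x = p + y}
        = P := by
      ext x
      simp only [mem_setOf_eq, List.not_mem_nil]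
      constructor
      · rintro ⟨p, hp, y, hy, rfl⟩
        have : {v : V | False} = (∅ : Set V) := by ext; simp
        rw [this, Submodule.span_empty, Submodule.mem_bot] at hy
        simpa [hy] using hp
      · intro hx
        exact ⟨x, hx, 0, Submodule.zero_mem _, by simp⟩
    rw [this]; exact hP
  | cons v l ih =>
    have hstep := (ih hP).add_line v
    have : {x : V | ∃ p ∈ P, ∃ y ∈ Submodule.span ℝ {w : V | w ∈ v :: l}, x = p + y}
        = {x : V | ∃ t : ℝ,
            x + t • v ∈ {x : V | ∃ p ∈ P, ∃ y ∈ Submodule.span ℝ {w : V | w ∈ l}, x = p + y}} := by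
      ext x
      simp only [mem_setOf_eq]
      constructor
      · rintro ⟨p, hp, y, hy, rfl⟩
        have hins : {w : V | w ∈ v :: l} = insert v {w : V | w ∈ l} := by
          ext w; simp [List.mem_cons]
        rw [hins, Submodule.mem_span_insert] at hy
        obtain ⟨t, z, hz, rfl⟩ := hy
        exact ⟨-t, p, hp, z, hz, by module⟩
      · rintro ⟨t, p, hp, z, hz, hx⟩
        refine ⟨p, hp, (-t) • v + z, ?_, ?_⟩
        · have hins : {w : V | w ∈ v :: l} = insert v {w : V | w ∈ l} := by
            ext w; simp [List.mem_cons]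
          rw [hins, Submodule.mem_span_insert]
          exact ⟨-t, z, Submodule.span_mono (by intro w hw; exact hw) hz, rfl⟩
        · have h2 : p + ((-t) • v + z) = (x + t • v) - t • v := by
            rw [hx]; module
          rw [h2]; module
    rw [this]
    exact hstep

end Poly

section Att

variable {V : Type*} [AddCommGroup V] [Module ℝ V] [FiniteDimensional ℝ V]

lemma MPoly.exists_min {P : Set V} (hP : MPoly P) (hne : P.Nonempty)
    (φ : V →ₗ[ℝ] ℝ) {c₀ : ℝ} (hbdd : ∀ x ∈ P, c₀ ≤ φ x) :
    ∃ x ∈ P, ∀ y ∈ P, φ x ≤ φ y := by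
  classical
  by_cases hφ : φ = 0
  · obtain ⟨x, hx⟩ := hne
    exact ⟨x, hx, fun y hy => by simp [hφ]⟩
  · obtain ⟨u, hu⟩ : ∃ u, φ u ≠ 0 := by
      by_contra h
      push_neg at h
      exact hφ (by ext x; simp [h x])
    set v₀ : V := (φ u)⁻¹ • u with hv₀
    have hφv₀ : φ v₀ = 1 := by
      rw [hv₀, map_smul, smul_eq_mul, inv_mul_cancel₀ hu]
    have hfg : (LinearMap.ker φ).FG := IsNoetherian.noetherian _
    obtain ⟨s, hs⟩ := hfg
    have hsl : {w : V | w ∈ s.toList} = (↑s : Set V) := by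
      ext w; simp [Finset.mem_toList]
    set S₁ : Set V :=
      {x : V | ∃ p ∈ P, ∃ y ∈ Submodule.span ℝ {w : V | w ∈ s.toList}, x = p + y} with hS₁
    have hS₁poly : MPoly S₁ := MPoly.add_span_list s.toList hP
    have hspan : Submodule.span ℝ {w : V | w ∈ s.toList} = LinearMap.ker φ := by
      rw [hsl, hs]
    set T : Set ℝ := {t : ℝ | t • v₀ ∈ S₁} with hT
    have hTim : T = φ '' P := by
      ext t
      constructor
      · rintro ht
        obtain ⟨p, hp, y, hy, hxy⟩ := ht
        rw [hspan, LinearMap.mem_ker] at hy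
        refine ⟨p, hp, ?_⟩
        have := congrArg φ hxy
        rw [map_smul, smul_eq_mul, hφv₀, mul_one, map_add, hy, add_zero] at this
        exact this.symm
      · rintro ⟨p, hp, rfl⟩
        refine ⟨p, hp, (φ p) • v₀ - p, ?_, by abel⟩
        rw [hspan, LinearMap.mem_ker, map_sub, map_smul, smul_eq_mul, hφv₀, mul_one, sub_self]
    have hTclosed : IsClosed T := by
      obtain ⟨M, a, b, hPeq⟩ := hS₁poly
      have : T = ⋂ m, {t : ℝ | t * a m v₀ ≤ b m} := by
        ext t
        rw [hT, mem_setOf_eq, hPeq, mem_setOf_eq]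
        simp only [mem_iInter, mem_setOf_eq, map_smul, smul_eq_mul]
      rw [this]
      exact isClosed_iInter fun m =>
        isClosed_le (by fun_prop) continuous_const
    have hTne : T.Nonempty := by
      rw [hTim]; exact hne.image φ
    have hTbdd : BddBelow T := by
      rw [hTim]
      exact ⟨c₀, by rintro t ⟨p, hp, rfl⟩; exact hbdd p hp⟩
    have hmem := hTclosed.csInf_mem hTne hTbdd
    rw [hTim] at hmem
    obtain ⟨x, hx, hxval⟩ := hmem
    refine ⟨x, hx, fun y hy => ?_⟩
    rw [hxval]
    exact csInf_le ⟨c₀, by rintro t ⟨p, hp, rfl⟩; exact hbdd p hp⟩ ⟨y, hy, rfl⟩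

end Att

section Tilt

variable {V : Type*} [AddCommGroup V] [Module ℝ V] [FiniteDimensional ℝ V]

set_option maxHeartbeats 1000000 in
lemma MPoly.tilt [TopologicalSpace V] {P : Set V} (hP : MPoly P)
    (u w : V →ₗ[ℝ] ℝ) (aa cc : ℝ)
    (hu : ∀ x ∈ P, u x ≤ aa)
    (hslice : ∃ x ∈ P, u x = aa)
    (hw : ∀ x ∈ P, u x = aa → w x ≤ cc) :
    ∃ ε : ℝ, 0 < ε ∧ ∀ x ∈ P, u x + ε * w x ≤ aa + ε * cc := by
  classical
  obtain ⟨M, aP, bP, hPeq⟩ := hP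
  by_cases hB : ∀ x ∈ P, w x ≤ cc
  · exact ⟨1, one_pos, fun x hx => by have h1 := hu x hx; have h2 := hB x hx; linarith⟩
  push_neg at hB
  obtain ⟨x₀, hx₀P, hx₀⟩ := hB
  obtain ⟨x₁, hx₁P, hx₁⟩ := hslice
  have hmemP : ∀ x : V, x ∈ P ↔ ∀ m, aP m x ≤ bP m := by
    intro x; rw [hPeq]; exact Iff.rfl
  set fstL := LinearMap.fst ℝ V ℝ with hfstL
  set sndL := LinearMap.snd ℝ V ℝ with hsndL
  set D : Set (V × ℝ) :=
    {z | (0:ℝ) ≤ z.2 ∧ (∀ m, aP m z.1 ≤ z.2 * bP m) ∧ w z.1 - z.2 * cc = 1} with hD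
  have hDpoly : MPoly D := by
    set A : (Fin M ⊕ Fin 3) → ((V × ℝ) →ₗ[ℝ] ℝ) := Sum.elim
      (fun m => (aP m).comp fstL - bP m • sndL)
      (fun i => ![-sndL, w.comp fstL - cc • sndL, cc • sndL - w.comp fstL] i) with hA
    set B : (Fin M ⊕ Fin 3) → ℝ := Sum.elim (fun _ => (0:ℝ)) (fun i => ![0, 1, -1] i) with hB
    have hDeq : D = {z : V × ℝ | ∀ j, A j z ≤ B j} := by
      ext z
      simp only [hD, mem_setOf_eq]
      constructor
      · rintro ⟨h0, hAll, h1⟩ j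
        match j with
        | .inl m =>
          have := hAll m
          simp only [hA, hB, Sum.elim_inl, LinearMap.sub_apply, LinearMap.comp_apply,
            LinearMap.smul_apply, hfstL, hsndL, LinearMap.fst_apply, LinearMap.snd_apply,
            smul_eq_mul]
          linarith [mul_comm z.2 (bP m) ▸ this]
        | .inr 0 =>
          simp only [hA, hB, Sum.elim_inr, Matrix.cons_val_zero, LinearMap.neg_apply,
            hsndL, LinearMap.snd_apply]
          linarith
        | .inr 1 =>
          simp only [hA, hB, Sum.elim_inr, Matrix.cons_val_one, Matrix.head_cons,
            LinearMap.sub_apply, LinearMap.comp_apply, LinearMap.smul_apply, hfstL, hsndL,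
            LinearMap.fst_apply, LinearMap.snd_apply, smul_eq_mul, Matrix.cons_val_zero]
          linarith [mul_comm z.2 cc ▸ h1]
        | .inr 2 =>
          simp only [hA, hB, Sum.elim_inr, Matrix.cons_val_two, Matrix.tail_cons,
            Matrix.head_cons, LinearMap.sub_apply, LinearMap.comp_apply,
            LinearMap.smul_apply, hfstL, hsndL, LinearMap.fst_apply, LinearMap.snd_apply,
            smul_eq_mul]
          linarith [mul_comm z.2 cc ▸ h1]
      · intro h
        have h0 := h (.inr 0)
        have h1 := h (.inr 1)
        have h2 := h (.inr 2)
        simp only [hA, hB, Sum.elim_inr, Matrix.cons_val_zero, Matrix.cons_val_one,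
          Matrix.head_cons, LinearMap.neg_apply, LinearMap.sub_apply, LinearMap.comp_apply,
          LinearMap.smul_apply, hfstL, hsndL, LinearMap.fst_apply, LinearMap.snd_apply,
          smul_eq_mul] at h0 h1
        have h2' : cc * z.2 - w z.1 ≤ -1 := by
          simpa only [hA, hB, Sum.elim_inr, Matrix.cons_val_two, Matrix.tail_cons,
            Matrix.head_cons, LinearMap.sub_apply, LinearMap.comp_apply, LinearMap.smul_apply,
            hfstL, hsndL, LinearMap.fst_apply, LinearMap.snd_apply, smul_eq_mul]
            using h2
        refine ⟨by linarith, fun m => ?_, by linarith⟩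
        have := h (.inl m)
        simp only [hA, hB, Sum.elim_inl, LinearMap.sub_apply, LinearMap.comp_apply,
          LinearMap.smul_apply, hfstL, hsndL, LinearMap.fst_apply, LinearMap.snd_apply,
          smul_eq_mul] at this
        linarith [mul_comm (bP m) z.2 ▸ this]
    rw [hDeq]
    exact MPoly.of_fintype A B
  set φ : (V × ℝ) →ₗ[ℝ] ℝ := aa • sndL - u.comp fstL with hφ
  have hφval : ∀ z : V × ℝ, φ z = aa * z.2 - u z.1 := by
    intro z
    simp [hφ, hfstL, hsndL]
  have hφ0 : ∀ z ∈ D, 0 ≤ φ z := by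
    rintro z ⟨h0, hAll, h1⟩
    rw [hφval]
    rcases eq_or_lt_of_le h0 with heq | hpos
    · have hA0 : ∀ m, aP m z.1 ≤ 0 := by
        intro m; have := hAll m; rw [← heq] at this; simpa using this
      have hz : x₁ + z.1 ∈ P := by
        rw [hmemP]; intro m
        have h3 := hA0 m
        have hx1m := (hmemP x₁).1 hx₁P m
        rw [map_add]; linarith
      have h4 := hu _ hz
      rw [map_add, hx₁] at h4
      rw [← heq]
      linarith
    · have hx : (z.2)⁻¹ • z.1 ∈ P := by
        rw [hmemP]; intro m
        rw [map_smul, smul_eq_mul]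
        have := hAll m
        calc (z.2)⁻¹ * aP m z.1 ≤ (z.2)⁻¹ * (z.2 * bP m) :=
              mul_le_mul_of_nonneg_left this (le_of_lt (inv_pos.mpr hpos))
          _ = bP m := by field_simp
      have h4 := hu _ hx
      rw [map_smul, smul_eq_mul] at h4
      have := mul_le_mul_of_nonneg_left h4 (le_of_lt hpos)
      have he : z.2 * ((z.2)⁻¹ * u z.1) = u z.1 := by field_simp
      rw [he] at this
      linarith
  have hDne : D.Nonempty := by
    set δ := w x₀ - cc with hδ
    have hδpos : 0 < δ := by rw [hδ]; linarith
    refine ⟨(δ⁻¹ • x₀, δ⁻¹), le_of_lt (inv_pos.mpr hδpos), fun m => ?_, ?_⟩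
    · rw [map_smul, smul_eq_mul]
      exact mul_le_mul_of_nonneg_left ((hmemP x₀).1 hx₀P m) (le_of_lt (inv_pos.mpr hδpos))
    · simp only [map_smul, smul_eq_mul]
      field_simp
      rw [hδ]
  obtain ⟨zs, hzsD, hzsmin⟩ := hDpoly.exists_min hDne φ (c₀ := 0) hφ0
  set σ := φ zs with hσ
  have hσ0 : 0 ≤ σ := hφ0 _ hzsD
  have hσpos : 0 < σ := by
    rcases eq_or_lt_of_le hσ0 with heq | h
    · exfalso
      obtain ⟨h0, hAll, h1⟩ := hzsD
      have hφzs : aa * zs.2 - u zs.1 = 0 := by rw [← hφval]; exact heq.symm ▸ rfl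
      rcases eq_or_lt_of_le h0 with hlam | hlam
      · -- zs.2 = 0 : recession direction
        have hA0 : ∀ m, aP m zs.1 ≤ 0 := by
          intro m; have := hAll m; rw [← hlam] at this; simpa using this
        have huz : u zs.1 = 0 := by rw [← hlam] at hφzs; linarith
        have hwz : w zs.1 = 1 := by rw [← hlam] at h1; simpa using h1
        set t := cc - w x₁ + 1 with ht
        have htpos : 0 ≤ t := by
          have : w x₁ ≤ cc := hw x₁ hx₁P hx₁
          rw [ht]; linarith
        have hmem : x₁ + t • zs.1 ∈ P := by
          rw [hmemP]; intro m
          rw [map_add, map_smul, smul_eq_mul]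
          have hx1m := (hmemP x₁).1 hx₁P m
          nlinarith [hA0 m]
        have huval : u (x₁ + t • zs.1) = aa := by
          rw [map_add, map_smul, smul_eq_mul, hx₁, huz]; ring
        have := hw _ hmem huval
        rw [map_add, map_smul, smul_eq_mul, hwz] at this
        rw [ht] at this
        linarith
      · -- zs.2 > 0
        set x := (zs.2)⁻¹ • zs.1 with hx
        have hxP : x ∈ P := by
          rw [hmemP]; intro m
          rw [hx, map_smul, smul_eq_mul]
          calc (zs.2)⁻¹ * aP m zs.1 ≤ (zs.2)⁻¹ * (zs.2 * bP m) :=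
                mul_le_mul_of_nonneg_left (hAll m) (le_of_lt (inv_pos.mpr hlam))
            _ = bP m := by field_simp
        have hux : u x = aa := by
          rw [hx, map_smul, smul_eq_mul]
          have : u zs.1 = aa * zs.2 := by linarith
          rw [this]; field_simp
        have hwx : w x = cc + (zs.2)⁻¹ := by
          rw [hx, map_smul, smul_eq_mul]
          have : w zs.1 = 1 + zs.2 * cc := by linarith
          rw [this]; field_simp; ring
        have := hw x hxP hux
        rw [hwx] at this
        linarith [inv_pos.mpr hlam]
    · exact h
  refine ⟨σ, hσpos, fun x hx => ?_⟩
  by_cases hwx : w x ≤ cc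
  · have := hu x hx
    nlinarith
  · push_neg at hwx
    set δ := w x - cc with hδ
    have hδpos : 0 < δ := by rw [hδ]; linarith
    have hmem : ((δ⁻¹ • x, δ⁻¹) : V × ℝ) ∈ D := by
      refine ⟨le_of_lt (inv_pos.mpr hδpos), fun m => ?_, ?_⟩
      · rw [map_smul, smul_eq_mul]
        exact mul_le_mul_of_nonneg_left ((hmemP x).1 hx m) (le_of_lt (inv_pos.mpr hδpos))
      · simp only [map_smul, smul_eq_mul]
        field_simp
        rw [hδ]
    have hge : σ ≤ aa * δ⁻¹ - δ⁻¹ * u x := by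
      have h5 := hzsmin _ hmem
      rw [hφval (δ⁻¹ • x, δ⁻¹)] at h5
      simpa [map_smul, smul_eq_mul] using h5
    have h6 := mul_le_mul_of_nonneg_left hge (le_of_lt hδpos)
    have he : δ * (aa * δ⁻¹ - δ⁻¹ * u x) = aa - u x := by field_simp
    rw [he] at h6
    rw [hδ] at h6
    nlinarith

section Intr

variable {E : Type*} [NormedAddCommGroup E] [NormedSpace ℝ E] {s tt : Set E} {x y : E}

lemma mem_intrinsicInterior_iff' :
    x ∈ intrinsicInterior ℝ s ↔
      x ∈ affineSpan ℝ s ∧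
        ∃ O : Set E, IsOpen O ∧ x ∈ O ∧ O ∩ (affineSpan ℝ s : Set E) ⊆ s := by
  constructor
  · rintro ⟨y, hy, rfl⟩
    obtain ⟨O, hO, hOpre⟩ := isOpen_induced_iff.mp (isOpen_interior (s := ((↑) ⁻¹' s : Set <| affineSpan ℝ s)))
    refine ⟨y.2, O, hO, ?_, ?_⟩
    · have : y ∈ ((↑) ⁻¹' O : Set <| affineSpan ℝ s) := by rw [hOpre]; exact hy
      exact this
    · rintro z ⟨hzO, hzspan⟩
      have : (⟨z, hzspan⟩ : affineSpan ℝ s) ∈ ((↑) ⁻¹' O : Set <| affineSpan ℝ s) := hzO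
      rw [hOpre] at this
      exact interior_subset (s := ((↑) ⁻¹' s : Set <| affineSpan ℝ s)) this
  · rintro ⟨hx, O, hO, hxO, hsub⟩
    refine ⟨⟨x, hx⟩, ?_, rfl⟩
    have hsub' : ((↑) ⁻¹' O : Set <| affineSpan ℝ s) ⊆ ((↑) ⁻¹' s : Set <| affineSpan ℝ s) := by
      intro z hz
      exact hsub ⟨hz, z.2⟩
    exact interior_maximal hsub' (hO.preimage continuous_subtype_val) hxO

lemma relint_extend (hx : x ∈ intrinsicInterior ℝ s) (hy : y ∈ s) :
    ∃ δ : ℝ, 0 < δ ∧ x + δ • (x - y) ∈ s := by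
  obtain ⟨hxspan, O, hO, hxO, hsub⟩ := mem_intrinsicInterior_iff'.mp hx
  have hyspan : y ∈ affineSpan ℝ s := subset_affineSpan ℝ s hy
  by_cases hxy : x = y
  · exact ⟨1, one_pos, by simpa [hxy] using hy⟩
  · obtain ⟨ε, hε, hball⟩ := Metric.isOpen_iff.mp hO x hxO
    set δ := ε / (2 * ‖x - y‖) with hδ
    have hne : (0:ℝ) < ‖x - y‖ := by
      rw [norm_pos_iff, sub_ne_zero]; exact hxy
    have hδpos : 0 < δ := by positivity
    refine ⟨δ, hδpos, hsub ⟨hball ?_, ?_⟩⟩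
    · rw [Metric.mem_ball, dist_eq_norm]
      have : x + δ • (x - y) - x = δ • (x - y) := by abel
      rw [this, norm_smul, Real.norm_eq_abs, abs_of_pos hδpos, hδ]
      rw [div_mul_eq_mul_div]
      rw [div_lt_iff₀ (by positivity)]
      nlinarith
    · have : x + δ • (x - y) = δ • (x -ᵥ y) +ᵥ x := by
        rw [vsub_eq_sub, vadd_eq_add]; abel
      rw [this]
      exact AffineSubspace.smul_vsub_vadd_mem _ δ hxspan hyspan hxspan

lemma max_on_relint_const {φ : E →L[ℝ] ℝ}
    (hmax : ∀ z ∈ s, φ z ≤ φ x) (hx : x ∈ intrinsicInterior ℝ s) (hy : y ∈ s) :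
    φ y = φ x := by
  obtain ⟨δ, hδ, hmem⟩ := relint_extend hx hy
  have h1 := hmax _ hmem
  have h2 := hmax _ hy
  rw [map_add, map_smul, map_sub, smul_eq_mul] at h1
  have : φ x ≤ φ y := by nlinarith
  linarith

lemma relint_mono_of_span_eq (hsub : s ⊆ tt)
    (hspan : affineSpan ℝ s = affineSpan ℝ tt) :
    intrinsicInterior ℝ s ⊆ intrinsicInterior ℝ tt := by
  intro z hz
  obtain ⟨hzspan, O, hO, hzO, hOsub⟩ := mem_intrinsicInterior_iff'.mp hz
  rw [mem_intrinsicInterior_iff']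
  refine ⟨hspan ▸ hzspan, O, hO, hzO, ?_⟩
  rw [← hspan]
  exact fun w hw => hsub (hOsub hw)

lemma relint_combo_mem (hconv : Convex ℝ s) (hx : x ∈ intrinsicInterior ℝ s) (hy : y ∈ s)
    {τ : ℝ} (h0 : 0 < τ) (h1 : τ < 1) :
    (1 - τ) • x + τ • y ∈ intrinsicInterior ℝ s := by
  obtain ⟨hxspan, O, hO, hxO, hsub⟩ := mem_intrinsicInterior_iff'.mp hx
  have hyspan : y ∈ affineSpan ℝ s := subset_affineSpan ℝ s hy
  have hc : (1 : ℝ) - τ ≠ 0 := by linarith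
  set h₁ : E ≃ₜ E :=
    (Homeomorph.smulOfNeZero ((1:ℝ) - τ) hc).trans (Homeomorph.addRight (τ • y)) with hh₁
  have hval : ∀ w : E, h₁ w = (1 - τ) • w + τ • y := fun w => rfl
  rw [mem_intrinsicInterior_iff']
  refine ⟨?_, h₁ '' O, h₁.isOpenMap O hO, ⟨x, hxO, (hval x).symm ▸ rfl⟩, ?_⟩
  · have : (1 - τ) • x + τ • y = τ • (y -ᵥ x) +ᵥ x := by
      rw [vsub_eq_sub, vadd_eq_add, smul_sub, sub_smul, one_smul]; abel
    rw [this]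
    exact AffineSubspace.smul_vsub_vadd_mem _ τ hyspan hxspan hxspan
  · rintro u ⟨⟨w, hwO, hwu⟩, huspan⟩
    have hwspan : w ∈ affineSpan ℝ s := by
      have hrepr : w = (1 - τ)⁻¹ • (u -ᵥ y) +ᵥ y := by
        rw [vsub_eq_sub, vadd_eq_add, ← hwu, hval]
        match_scalars <;> field_simp <;> ring
      rw [hrepr]
      exact AffineSubspace.smul_vsub_vadd_mem _ _ huspan hyspan hyspan
    have hws : w ∈ s := hsub ⟨hwO, hwspan⟩
    rw [← hwu, hval]
    exact hconv hws hy (by linarith) (le_of_lt h0) (by ring)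

end Intr

section Intr2

variable {E : Type*} [NormedAddCommGroup E] [NormedSpace ℝ E] {s : Set E} {x y : E}

lemma relint_convex (hconv : Convex ℝ s) : Convex ℝ (intrinsicInterior ℝ s) := by
  intro x hx y hy a b ha hb hab
  rcases eq_or_lt_of_le ha with h | h
  · have hb1 : b = 1 := by linarith
    simpa [← h, hb1] using hy
  · rcases eq_or_lt_of_le hb with h2 | h2
    · have ha1 : a = 1 := by linarith
      simpa [← h2, ha1] using hx
    · have ha' : a = 1 - b := by linarith
      have hb1 : b < 1 := by linarith
      rw [ha']
      exact relint_combo_mem hconv hx (intrinsicInterior_subset hy) h2 hb1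

lemma lt_on_relint_le {φ : E →L[ℝ] ℝ} {t : ℝ} (hconv : Convex ℝ s)
    (h : ∀ z ∈ intrinsicInterior ℝ s, φ z < t)
    (hx : x ∈ intrinsicInterior ℝ s) (hy : y ∈ s) : φ y ≤ t := by
  by_contra hyt
  push_neg at hyt
  have hxt : φ x < t := h x hx
  set τ := (t - φ x) / (φ y - φ x) with hτ
  have hd : 0 < φ y - φ x := by linarith
  have h0 : 0 < τ := div_pos (by linarith) hd
  have h1 : τ < 1 := by rw [hτ, div_lt_one hd]; linarith
  have hz := relint_combo_mem hconv hx hy h0 h1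
  have hval : φ ((1 - τ) • x + τ • y) = t := by
    rw [map_add, map_smul, map_smul, smul_eq_mul, smul_eq_mul, hτ]
    field_simp
    ring
  have := h _ hz
  rw [hval] at this
  exact lt_irrefl _ this

lemma lt_on_interior_le {φ : E →L[ℝ] ℝ} {t : ℝ} (hconv : Convex ℝ s)
    (h : ∀ z ∈ interior s, φ z < t)
    (hx : x ∈ interior s) (hy : y ∈ s) : φ y ≤ t := by
  by_contra hyt
  push_neg at hyt
  have hxt : φ x < t := h x hx
  set τ := (t - φ x) / (φ y - φ x) with hτ
  have hd : 0 < φ y - φ x := by linarith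
  have h0 : 0 < τ := div_pos (by linarith) hd
  have h1 : τ < 1 := by rw [hτ, div_lt_one hd]; linarith
  have hz : (1 - τ) • x + τ • y ∈ interior s :=
    hconv.combo_interior_self_mem_interior hx hy (by linarith) (le_of_lt h0) (by ring)
  have hval : φ ((1 - τ) • x + τ • y) = t := by
    rw [map_add, map_smul, map_smul, smul_eq_mul, smul_eq_mul, hτ]
    field_simp
    ring
  have := h _ hz
  rw [hval] at this
  exact lt_irrefl _ this

lemma interior_halfspace_lt {φ : E →L[ℝ] ℝ} {c : ℝ} {v : E} (hv : φ v ≠ 0)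
    (hx : x ∈ interior {y : E | φ y ≤ c}) : φ x < c := by
  have hle : φ x ≤ c := interior_subset (s := {y : E | φ y ≤ c}) hx
  rcases lt_or_eq_of_le hle with h | h
  · exact h
  · exfalso
    obtain ⟨ε, hε, hball⟩ := Metric.isOpen_iff.mp isOpen_interior x hx
    set w := if 0 < φ v then v else -v with hw
    have hφw : 0 < φ w := by
      rcases lt_trichotomy (φ v) 0 with h1 | h1 | h1
      · rw [hw, if_neg (by linarith)]; simpa using h1
      · exact absurd h1 hv
      · rw [hw, if_pos h1]; exact h1
    have hwne : (0:ℝ) < ‖w‖ := by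
      rw [norm_pos_iff]
      intro h0
      rw [h0] at hφw; simp at hφw
    set δ := ε / (2 * ‖w‖) with hδ
    have hδpos : 0 < δ := by positivity
    have hmem : x + δ • w ∈ interior {y : E | φ y ≤ c} := by
      apply hball
      rw [Metric.mem_ball, dist_eq_norm]
      have h2 : x + δ • w - x = δ • w := by abel
      rw [h2, norm_smul, Real.norm_eq_abs, abs_of_pos hδpos, hδ, div_mul_eq_mul_div,
        div_lt_iff₀ (by positivity)]
      nlinarith
    have := interior_subset hmem
    rw [mem_setOf_eq, map_add, map_smul, smul_eq_mul, h] at this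
    nlinarith

end Intr2

lemma tilt_mono {V : Type*} [AddCommGroup V] [Module ℝ V] {P : Set V}
    {u w : V →ₗ[ℝ] ℝ} {aa cc ε₁ ε : ℝ} (hε : 0 < ε) (hε₁ : ε ≤ ε₁)
    (hbase : ∀ x ∈ P, u x ≤ aa) (h : ∀ x ∈ P, u x + ε₁ * w x ≤ aa + ε₁ * cc) :
    ∀ x ∈ P, u x + ε * w x ≤ aa + ε * cc := by
  intro x hx
  have h1 := hbase x hx
  have h2 := h x hx
  rcases le_or_gt (w x) cc with h3 | h3
  · nlinarith
  · nlinarith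

def IsFreeSet {d : ℕ} (S L : Set (Fin d → ℝ)) : Prop :=
  IsClosed L ∧ Convex ℝ L ∧ interior L ∩ S = ∅

def IsMaxFree {d : ℕ} (S L : Set (Fin d → ℝ)) : Prop :=
  IsFreeSet S L ∧ ∀ L', IsFreeSet S L' → L ⊆ L' → L' = L

def IsPolyhedron {d : ℕ} (P : Set (Fin d → ℝ)) : Prop :=
  ∃ (m : ℕ) (u : Fin m → ((Fin d → ℝ) →ₗ[ℝ] ℝ)) (b : Fin m → ℝ),
    P = {x | ∀ i, u i x ≤ b i}

def FullDim {d : ℕ} (A : Set (Fin d → ℝ)) : Prop := affineSpan ℝ A = ⊤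

noncomputable def adim {d : ℕ} (A : Set (Fin d → ℝ)) : ℕ :=
  Module.finrank ℝ (affineSpan ℝ A).direction

def IsFacet {d : ℕ} (P F : Set (Fin d → ℝ)) : Prop :=
  F.Nonempty ∧ IsExposed ℝ P F ∧ adim F + 1 = d

def FacetsLE {d : ℕ} (P : Set (Fin d → ℝ)) (k : ℕ) : Prop :=
  {F : Set (Fin d → ℝ) | IsFacet P F}.encard ≤ (k : ℕ∞)

set_option maxHeartbeats 2000000 in
theorem maxfree_union_polyhedra {d k : ℕ} (hk : 0 < k) (C : Fin k → Set (Fin d → ℝ))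
    (hpoly : ∀ i, IsPolyhedron (C i)) (hne : ∀ i, (C i).Nonempty)
    (S : Set (Fin d → ℝ)) (hS : S = ⋃ i, C i)
    (L : Set (Fin d → ℝ)) (hL : IsMaxFree S L) (hdim : FullDim L) :
    IsPolyhedron L ∧ FacetsLE L k ∧
      ∀ F, IsFacet L F → (intrinsicInterior ℝ F ∩ S).Nonempty := by
  classical
  obtain ⟨⟨hLclosed, hLconv, hLfree⟩, hLmax⟩ := hL
  have hCpoly : ∀ i, MPoly (C i) := hpoly
  have hCconv : ∀ i, Convex ℝ (C i) := by
    intro i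
    obtain ⟨M, a, b, hCeq⟩ := hCpoly i
    rw [hCeq]
    intro x hx y hy p q hp hq hpq m
    have h1 := hx m
    have h2 := hy m
    rw [map_add, map_smul, map_smul, smul_eq_mul, smul_eq_mul]
    have h3 : p * b m + q * b m = b m := by rw [← add_mul, hpq, one_mul]
    linarith [mul_le_mul_of_nonneg_left h1 hp, mul_le_mul_of_nonneg_left h2 hq]
  have hCS : ∀ i, C i ⊆ S := by intro i; rw [hS]; exact subset_iUnion C i
  have hIntC : ∀ i, Disjoint (interior L) (C i) := by
    intro i
    rw [Set.disjoint_left]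
    intro x hx1 hx2
    have hmem : x ∈ interior L ∩ S := ⟨hx1, hCS i hx2⟩
    rw [hLfree] at hmem
    exact hmem
  have hIntNe : (interior L).Nonempty := by
    rw [hLconv.interior_nonempty_iff_affineSpan_eq_top]; exact hdim
  obtain ⟨z₀, hz₀⟩ := hIntNe
  have hsep : ∀ i : Fin k, ∃ φ : (Fin d → ℝ) →L[ℝ] ℝ, ∃ c : ℝ,
      (∀ x ∈ interior L, φ x < c) ∧ ∀ x ∈ C i, c ≤ φ x :=
    fun i => geometric_hahn_banach_open hLconv.interior isOpen_interior (hCconv i) (hIntC i)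
  choose f s hf₁ hf₂ using hsep
  have hfne : ∀ i, ∃ v, f i v ≠ 0 := by
    intro i
    obtain ⟨c₀, hc₀⟩ := hne i
    refine ⟨c₀ - z₀, ?_⟩
    have h1 := hf₁ i z₀ hz₀
    have h2 := hf₂ i c₀ hc₀
    rw [map_sub]
    intro h
    rw [sub_eq_zero] at h
    rw [h] at h2
    linarith
  have hLle : ∀ i, ∀ x ∈ L, f i x ≤ s i :=
    fun i x hx => lt_on_interior_le hLconv (hf₁ i) hz₀ hx
  set P := {x : Fin d → ℝ | ∀ i, f i x ≤ s i} with hPdef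
  have hLP : L ⊆ P := fun x hx i => hLle i x hx
  have hPeqInter : P = ⋂ i, {x : Fin d → ℝ | f i x ≤ s i} := by
    ext x; simp [hPdef, mem_iInter]
  have hPclosed : IsClosed P := by
    rw [hPeqInter]
    exact isClosed_iInter fun i => isClosed_le (f i).continuous continuous_const
  have hPconv : Convex ℝ P := by
    rw [hPeqInter]
    refine convex_iInter fun i => ?_
    intro x hx y hy p q hp hq hpq
    simp only [mem_setOf_eq] at hx hy ⊢
    rw [map_add, map_smul, map_smul, smul_eq_mul, smul_eq_mul]
    have h3 : p * s i + q * s i = s i := by rw [← add_mul, hpq, one_mul]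
    linarith [mul_le_mul_of_nonneg_left hx hp, mul_le_mul_of_nonneg_left hy hq]
  have hPintC : ∀ i, ∀ x ∈ interior P, f i x < s i := by
    intro i x hx
    obtain ⟨v, hv⟩ := hfne i
    apply interior_halfspace_lt hv
    refine interior_mono ?_ hx
    intro y hy
    exact hy i
  have hPfree : IsFreeSet S P := by
    refine ⟨hPclosed, hPconv, ?_⟩
    rw [hS]
    apply subset_antisymm _ (empty_subset _)
    rintro x ⟨hx1, hx2⟩
    rw [mem_iUnion] at hx2
    obtain ⟨i, hxi⟩ := hx2
    have h3 := hPintC i x hx1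
    have h4 := hf₂ i x hxi
    linarith
  have hPL : P = L := hLmax P hPfree hLP
  have hLpoly : IsPolyhedron L := ⟨k, fun i => (f i).toLinearMap, s, by rw [← hPL]; rfl⟩
  have hMPolyL : MPoly L := ⟨k, fun i => (f i).toLinearMap, s, by rw [← hPL]; rfl⟩
  have hadimL : adim L = d := by
    unfold adim
    rw [show affineSpan ℝ L = ⊤ from hdim, AffineSubspace.direction_top, finrank_top]
    exact Module.finrank_fin_fun ℝ
  have hFnotint : ∀ F, IsFacet L F → ∀ x ∈ F, x ∉ interior L := by
    rintro F ⟨hFne, hFexp, hFdim⟩ x hxF hxint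
    obtain ⟨l, hlF⟩ := hFexp hFne
    have hxF' : x ∈ {z ∈ L | ∀ y ∈ L, l y ≤ l z} := by rw [← hlF]; exact hxF
    have hconst : ∀ y ∈ L, l y = l x :=
      fun y hy => max_on_relint_const hxF'.2 (interior_subset_intrinsicInterior hxint) hy
    have hLF : L ⊆ F := by
      intro z hz
      rw [hlF]
      refine ⟨hz, fun y hy => ?_⟩
      rw [hconst y hy, hconst z hz]
    have hFeqL : F = L := Set.Subset.antisymm hFexp.subset hLF
    rw [hFeqL, hadimL] at hFdim
    omega
  have htouch : ∀ F i, IsFacet L F → (∃ x ∈ intrinsicInterior ℝ F, f i x = s i) →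
      F = L ∩ {x | f i x = s i} ∧
        (affineSpan ℝ F : Set (Fin d → ℝ)) = {x | f i x = s i} := by
    rintro F i ⟨hFne, hFexp, hFdim⟩ ⟨x₃, hx₃relF, hx₃⟩
    obtain ⟨l, hlF⟩ := hFexp hFne
    have hFconv : Convex ℝ F := hFexp.convex hLconv
    have hFsubL : F ⊆ L := hFexp.subset
    have hx₃F : x₃ ∈ F := intrinsicInterior_subset hx₃relF
    have hFM : ∀ y ∈ F, f i y = s i := by
      intro y hy
      have hmax : ∀ z ∈ F, f i z ≤ f i x₃ := by
        intro z hz; rw [hx₃]; exact hLle i z (hFsubL hz)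
      have := max_on_relint_const hmax hx₃relF hy
      rw [this, hx₃]
    have hFG : F ⊆ L ∩ {x | f i x = s i} := fun y hy => ⟨hFsubL hy, hFM y hy⟩
    obtain ⟨v, hv⟩ := hfne i
    set Msub := AffineSubspace.mk' x₃ (LinearMap.ker (f i).toLinearMap) with hMsubdef
    have hMsubset : (Msub : Set (Fin d → ℝ)) = {x | f i x = s i} := by
      ext z
      rw [SetLike.mem_coe, hMsubdef, AffineSubspace.mem_mk', LinearMap.mem_ker]
      rw [mem_setOf_eq]
      constructor
      · intro h
        have : f i (z -ᵥ x₃) = 0 := h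
        rw [vsub_eq_sub, map_sub, hx₃] at this
        linarith
      · intro h
        show f i (z -ᵥ x₃) = 0
        rw [vsub_eq_sub, map_sub, hx₃, h]
        ring
    have hrange : LinearMap.range (f i).toLinearMap = ⊤ := by
      rw [LinearMap.range_eq_top]
      intro c
      refine ⟨(c / f i v) • v, ?_⟩
      show f i ((c / f i v) • v) = c
      rw [map_smul, smul_eq_mul]
      field_simp
    have hker : Module.finrank ℝ (LinearMap.ker (f i).toLinearMap) + 1 = d := by
      have h1 := LinearMap.finrank_range_add_finrank_ker (f i).toLinearMap
      rw [hrange, finrank_top, Module.finrank_self] at h1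
      rw [Module.finrank_fin_fun ℝ] at h1
      omega
    have hle1 : affineSpan ℝ F ≤ Msub := by
      rw [affineSpan_le, hMsubset]
      exact fun y hy => hFM y hy
    have hdirle : (affineSpan ℝ F).direction ≤ Msub.direction :=
      AffineSubspace.direction_le hle1
    rw [hMsubdef, AffineSubspace.direction_mk'] at hdirle
    have hdimF : Module.finrank ℝ (affineSpan ℝ F).direction
        = Module.finrank ℝ (LinearMap.ker (f i).toLinearMap) := by
      unfold adim at hFdim
      omega
    have hdireq := Submodule.eq_of_le_of_finrank_eq hdirle hdimF
    have hx₃span : x₃ ∈ affineSpan ℝ F := subset_affineSpan ℝ F hx₃F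
    have hx₃M : x₃ ∈ Msub := AffineSubspace.self_mem_mk' _ _
    have hspanM : affineSpan ℝ F = Msub := by
      rw [AffineSubspace.eq_iff_direction_eq_of_mem hx₃span hx₃M]
      rw [hMsubdef, AffineSubspace.direction_mk']
      exact hdireq
    have hle2 : affineSpan ℝ (L ∩ {x | f i x = s i}) ≤ Msub := by
      rw [affineSpan_le, hMsubset]
      exact fun y hy => hy.2
    have hle3 : affineSpan ℝ F ≤ affineSpan ℝ (L ∩ {x | f i x = s i}) :=
      affineSpan_mono ℝ hFG
    have hspanFG : affineSpan ℝ F = affineSpan ℝ (L ∩ {x | f i x = s i}) :=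
      le_antisymm hle3 (by rw [hspanM]; exact hle2)
    have hrelsub : intrinsicInterior ℝ F ⊆ intrinsicInterior ℝ (L ∩ {x | f i x = s i}) :=
      relint_mono_of_span_eq hFG hspanFG
    have hx₃F' : x₃ ∈ {z ∈ L | ∀ y ∈ L, l y ≤ l z} := by rw [← hlF]; exact hx₃F
    have hGF : L ∩ {x | f i x = s i} ⊆ F := by
      intro y hyG
      have hmax2 : ∀ z ∈ L ∩ {x | f i x = s i}, l z ≤ l x₃ :=
        fun z hz => hx₃F'.2 z hz.1
      have hconst := max_on_relint_const hmax2 (hrelsub hx₃relF) hyG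
      rw [hlF]
      refine ⟨hyG.1, fun z hz => ?_⟩
      rw [hconst]
      exact hx₃F'.2 z hz
    refine ⟨Set.Subset.antisymm hFG hGF, by rw [hspanM, hMsubset]⟩
  have hfacet_eq : ∀ F, IsFacet L F → ∃ i, F = L ∩ {x | f i x = s i} := by
    intro F hFa
    by_cases hcase : ∃ i, ∃ x ∈ intrinsicInterior ℝ F, f i x = s i
    · obtain ⟨i, hx⟩ := hcase
      exact ⟨i, (htouch F i hFa hx).1⟩
    · exfalso
      push_neg at hcase
      obtain ⟨hFne, hFexp, hFdim⟩ := hFa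
      have hFconv : Convex ℝ F := hFexp.convex hLconv
      obtain ⟨x₂, hx₂⟩ := hFne.intrinsicInterior hFconv
      have hx₂L : x₂ ∈ L := hFexp.subset (intrinsicInterior_subset hx₂)
      have hx₂lt : ∀ i, f i x₂ < s i := by
        intro i
        rcases lt_or_eq_of_le (hLle i x₂ hx₂L) with h | h
        · exact h
        · exact absurd h (hcase i x₂ hx₂)
      have hOsub : {x : Fin d → ℝ | ∀ i, f i x < s i} ⊆ L := by
        intro x hx
        rw [← hPL]
        exact fun i => le_of_lt (hx i)
      have hOopen : IsOpen {x : Fin d → ℝ | ∀ i, f i x < s i} := by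
        have heq : {x : Fin d → ℝ | ∀ i, f i x < s i} = ⋂ i, {x | f i x < s i} := by
          ext x; simp [mem_iInter]
        rw [heq]
        exact isOpen_iInter_of_finite fun i =>
          isOpen_lt (f i).continuous continuous_const
      have hx₂int : x₂ ∈ interior L :=
        interior_maximal hOsub hOopen (fun i => hx₂lt i)
      exact hFnotint F ⟨hFne, hFexp, hFdim⟩ x₂ (intrinsicInterior_subset hx₂) hx₂int
  have hFacetsLE : FacetsLE L k := by
    unfold FacetsLE
    have hsub : {F : Set (Fin d → ℝ) | IsFacet L F} ⊆
        (fun i : Fin k => L ∩ {x | f i x = s i}) '' Set.univ := by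
      intro F hF
      obtain ⟨i, hi⟩ := hfacet_eq F hF
      exact ⟨i, mem_univ i, hi.symm⟩
    refine le_trans (Set.encard_mono hsub) (le_trans (Set.encard_image_le _ _) ?_)
    rw [Set.encard_univ]
    simp
  have hPart3 : ∀ F, IsFacet L F → (intrinsicInterior ℝ F ∩ S).Nonempty := by
    intro F hFa
    by_contra hcon
    rw [Set.not_nonempty_iff_eq_empty] at hcon
    have hrelS : ∀ x ∈ intrinsicInterior ℝ F, x ∉ S := by
      intro x hx hxS
      have hmem : x ∈ intrinsicInterior ℝ F ∩ S := ⟨hx, hxS⟩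
      rw [hcon] at hmem
      exact hmem
    obtain ⟨hFne, hFexp, hFdim⟩ := hFa
    have hFconv : Convex ℝ F := hFexp.convex hLconv
    have hFsubL : F ⊆ L := hFexp.subset
    obtain ⟨x₂, hx₂⟩ := hFne.intrinsicInterior hFconv
    have hhalf : ∀ i : Fin k, ∃ (g : (Fin d → ℝ) →L[ℝ] ℝ) (r : ℝ),
        (∀ x ∈ L, g x ≤ r) ∧ (∀ x ∈ intrinsicInterior ℝ F, g x < r) ∧
          ∀ x ∈ C i, r ≤ g x := by
      intro i
      by_cases hA : ∀ x ∈ intrinsicInterior ℝ F, f i x < s i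
      · exact ⟨f i, s i, hLle i, hA, hf₂ i⟩
      push_neg at hA
      obtain ⟨x₃, hx₃relF, hx₃ge⟩ := hA
      have hx₃eq : f i x₃ = s i :=
        le_antisymm (hLle i x₃ (hFsubL (intrinsicInterior_subset hx₃relF))) hx₃ge
      obtain ⟨hFG, hFspan⟩ := htouch F i ⟨hFne, hFexp, hFdim⟩ ⟨x₃, hx₃relF, hx₃eq⟩
      by_cases hQ : (C i ∩ {x | f i x = s i}).Nonempty
      · -- tilting case
        obtain ⟨v, hv⟩ := hfne i
        set n := (f i v)⁻¹ • v with hndef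
        have hfn : f i n = 1 := by rw [hndef, map_smul, smul_eq_mul]; field_simp
        clear_value n
        set ψ : (Fin d → ℝ) → (Fin d → ℝ) := fun z => z - (f i z - s i) • n with hψdef
        have hψcont : Continuous ψ := by
          apply Continuous.sub continuous_id
          exact Continuous.smul (Continuous.sub (f i).continuous continuous_const)
            continuous_const
        have hψval : ∀ z, f i (ψ z) = s i := by
          intro z
          show f i (z - (f i z - s i) • n) = s i
          rw [map_sub, map_smul, smul_eq_mul, hfn]
          ring
        have hψfix : ∀ z, f i z = s i → ψ z = z := by
          intro z hz
          show z - (f i z - s i) • n = z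
          rw [hz]
          simp
        set U := ψ ⁻¹' (intrinsicInterior ℝ F) with hUdef
        have hrelFM : ∀ z ∈ F, f i z = s i := by
          intro z hz; rw [hFG] at hz; exact hz.2
        have hFsubU : intrinsicInterior ℝ F ⊆ U := by
          intro z hz
          rw [hUdef, mem_preimage, hψfix z (hrelFM z (intrinsicInterior_subset hz))]
          exact hz
        have hUopen : IsOpen U := by
          rw [isOpen_iff_mem_nhds]
          intro y hy
          rw [hUdef, mem_preimage] at hy
          obtain ⟨hspan, O, hO, hxO, hOsub⟩ := mem_intrinsicInterior_iff'.mp hy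
          have hnb : ψ ⁻¹' O ∈ nhds y :=
            hψcont.continuousAt.preimage_mem_nhds (hO.mem_nhds hxO)
          filter_upwards [hnb] with z hz
          rw [hUdef, mem_preimage, mem_intrinsicInterior_iff']
          have hzspan : ψ z ∈ affineSpan ℝ F := by
            have hmem : ψ z ∈ (affineSpan ℝ F : Set (Fin d → ℝ)) := by
              rw [hFspan]
              exact hψval z
            exact hmem
          exact ⟨hzspan, O, hO, hz, hOsub⟩
        have hUconv : Convex ℝ U := by
          intro a ha b hb p q hp hq hpq
          rw [hUdef, mem_preimage] at ha hb ⊢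
          have hfval : f i (p • a + q • b) = p * f i a + q * f i b := by
            rw [map_add, map_smul, map_smul, smul_eq_mul, smul_eq_mul]
          have haff : ψ (p • a + q • b) = p • ψ a + q • ψ b := by
            show (p • a + q • b) - (f i (p • a + q • b) - s i) • n
              = p • (a - (f i a - s i) • n) + q • (b - (f i b - s i) • n)
            rw [hfval]
            have hsplit : (p * f i a + q * f i b - s i)
                = p * (f i a - s i) + q * (f i b - s i) + (p * s i + q * s i - s i) := by
              ring
            rw [hsplit]
            have hzero : p * s i + q * s i - s i = 0 := by linear_combination (s i) * hpq
            rw [hzero, add_zero]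
            module
          rw [haff]
          exact relint_convex hFconv ha hb hp hq hpq
        have hUne : U.Nonempty := ⟨x₂, hFsubU hx₂⟩
        have hQconv : Convex ℝ (C i ∩ {x | f i x = s i}) := by
          refine (hCconv i).inter ?_
          intro x hx y hy p q hp hq hpq
          simp only [mem_setOf_eq] at hx hy ⊢
          rw [map_add, map_smul, map_smul, smul_eq_mul, smul_eq_mul, hx, hy]
          linear_combination (s i) * hpq
        have hdisj : Disjoint U (C i ∩ {x | f i x = s i}) := by
          rw [Set.disjoint_left]
          rintro z hzU ⟨hzC, hzM⟩
          have hfix : ψ z = z := hψfix z hzM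
          rw [hUdef, mem_preimage, hfix] at hzU
          exact hrelS z hzU (hCS i hzC)
        obtain ⟨g, t, hg₁, hg₂⟩ := geometric_hahn_banach_open hUconv hUopen hQconv hdisj
        have hgrel : ∀ x ∈ intrinsicInterior ℝ F, g x < t := fun x hx => hg₁ x (hFsubU hx)
        have hgF : ∀ x ∈ F, g x ≤ t := fun x hx => lt_on_relint_le hFconv hgrel hx₂ hx
        obtain ⟨ε₁, hε₁pos, hε₁⟩ := hMPolyL.tilt (f i).toLinearMap g.toLinearMap (s i) t
          (fun x hx => hLle i x hx)
          ⟨x₃, hFsubL (intrinsicInterior_subset hx₃relF), hx₃eq⟩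
          (fun x hx hxe => hgF x (by rw [hFG]; exact ⟨hx, hxe⟩))
        obtain ⟨ε₂, hε₂pos, hε₂⟩ := (hCpoly i).tilt (-(f i).toLinearMap) (-g.toLinearMap)
          (-(s i)) (-t)
          (fun x hx => by
            have := hf₂ i x hx
            simp only [LinearMap.neg_apply]
            show -(f i x) ≤ -(s i)
            linarith)
          (by
            obtain ⟨qq, hq1, hq2⟩ := hQ
            exact ⟨qq, hq1, by
              simp only [LinearMap.neg_apply]
              show -(f i qq) = -(s i)
              rw [mem_setOf_eq] at hq2
              linarith⟩)
          (fun x hx hxe => by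
            simp only [LinearMap.neg_apply] at hxe ⊢
            have hfx : f i x = s i := by
              have : -(f i x) = -(s i) := hxe
              linarith
            have := hg₂ x ⟨hx, hfx⟩
            show -(g x) ≤ -t
            linarith)
        set ε := min ε₁ ε₂ with hεdef
        have hεpos : 0 < ε := lt_min hε₁pos hε₂pos
        have hLtilt := tilt_mono hεpos (min_le_left _ _) (fun x hx => hLle i x hx) hε₁
        have hCtilt := tilt_mono hεpos (min_le_right _ _)
          (fun x hx => by
            have := hf₂ i x hx
            show -(f i x) ≤ -(s i)
            linarith) hε₂
        refine ⟨f i + ε • g, s i + ε * t, ?_, ?_, ?_⟩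
        · intro x hx
          have := hLtilt x hx
          simpa using this
        · intro x hx
          have h1 : f i x = s i := hrelFM x (intrinsicInterior_subset hx)
          have h2 : g x < t := hgrel x hx
          simp only [ContinuousLinearMap.add_apply, ContinuousLinearMap.coe_smul',
            Pi.smul_apply, smul_eq_mul]
          rw [h1]
          nlinarith
        · intro x hx
          have := hCtilt x hx
          simp only [LinearMap.neg_apply, ContinuousLinearMap.coe_coe] at this
          simp only [ContinuousLinearMap.add_apply, ContinuousLinearMap.coe_smul',
            Pi.smul_apply, smul_eq_mul]
          linarith
      · -- attained minimum case
        have hgt : ∀ x ∈ C i, s i < f i x := by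
          intro x hx
          rcases lt_or_eq_of_le (hf₂ i x hx) with h | h
          · exact h
          · exact absurd ⟨x, hx, h.symm⟩ hQ
        obtain ⟨cstar, hcstarC, hcstarmin⟩ := (hCpoly i).exists_min (hne i) (f i).toLinearMap
          (c₀ := s i) (fun x hx => le_of_lt (hgt x hx))
        have hsc : s i < f i cstar := hgt cstar hcstarC
        refine ⟨f i, (s i + f i cstar) / 2, ?_, ?_, ?_⟩
        · intro x hx
          have := hLle i x hx
          linarith
        · intro x hx
          have := hLle i x (hFsubL (intrinsicInterior_subset hx))
          linarith
        · intro x hx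
          have h1 : f i cstar ≤ f i x := hcstarmin x hx
          linarith
    choose g r hg₁ hg₂ hg₃ using hhalf
    have hgne : ∀ i, ∃ v, g i v ≠ 0 := by
      intro i
      obtain ⟨c₀, hc₀⟩ := hne i
      refine ⟨c₀ - x₂, ?_⟩
      have h1 := hg₂ i x₂ hx₂
      have h2 := hg₃ i c₀ hc₀
      rw [map_sub]
      intro h
      rw [sub_eq_zero] at h
      rw [h] at h2
      linarith
    set L' := {x : Fin d → ℝ | ∀ i, g i x ≤ r i} with hL'def
    have hLL' : L ⊆ L' := fun x hx i => hg₁ i x hx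
    have hL'eqInter : L' = ⋂ i, {x : Fin d → ℝ | g i x ≤ r i} := by
      ext x; simp [hL'def, mem_iInter]
    have hL'closed : IsClosed L' := by
      rw [hL'eqInter]
      exact isClosed_iInter fun i => isClosed_le (g i).continuous continuous_const
    have hL'conv : Convex ℝ L' := by
      rw [hL'eqInter]
      refine convex_iInter fun i => ?_
      intro x hx y hy p q hp hq hpq
      simp only [mem_setOf_eq] at hx hy ⊢
      rw [map_add, map_smul, map_smul, smul_eq_mul, smul_eq_mul]
      have h3 : p * r i + q * r i = r i := by rw [← add_mul, hpq, one_mul]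
      linarith [mul_le_mul_of_nonneg_left hx hp, mul_le_mul_of_nonneg_left hy hq]
    have hL'intC : ∀ i, ∀ x ∈ interior L', g i x < r i := by
      intro i x hx
      obtain ⟨v, hv⟩ := hgne i
      apply interior_halfspace_lt hv
      refine interior_mono ?_ hx
      intro y hy
      exact hy i
    have hL'free : IsFreeSet S L' := by
      refine ⟨hL'closed, hL'conv, ?_⟩
      rw [hS]
      apply subset_antisymm _ (empty_subset _)
      rintro x ⟨hx1, hx2⟩
      rw [mem_iUnion] at hx2
      obtain ⟨i, hxi⟩ := hx2
      have h3 := hL'intC i x hx1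
      have h4 := hg₃ i x hxi
      linarith
    have hL'L : L' = L := hLmax L' hL'free hLL'
    have hOsub : {x : Fin d → ℝ | ∀ i, g i x < r i} ⊆ L' :=
      fun x hx i => le_of_lt (hx i)
    have hOopen : IsOpen {x : Fin d → ℝ | ∀ i, g i x < r i} := by
      have heq : {x : Fin d → ℝ | ∀ i, g i x < r i} = ⋂ i, {x | g i x < r i} := by
        ext x; simp [mem_iInter]
      rw [heq]
      exact isOpen_iInter_of_finite fun i => isOpen_lt (g i).continuous continuous_const
    have hx₂int : x₂ ∈ interior L' :=
      interior_maximal hOsub hOopen (fun i => hg₂ i x₂ hx₂)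
    rw [hL'L] at hx₂int
    exact hFnotint F ⟨hFne, hFexp, hFdim⟩ x₂ (intrinsicInterior_subset hx₂) hx₂int
  exact ⟨hLpoly, hFacetsLE, hPart3⟩
end Tilt
end

section
/- Let C be a bounded convex subset of ℝ^d and S = ℤ^d ∩ C. Then every d-dimensional maximal S-free set is a polyhedron with at most 2^d facets. -/
open Set

section Helpers

variable {d : ℕ}


local notation "E" => (Fin d → ℝ)

lemma exists_pos_apply {g : (Fin d → ℝ) →L[ℝ] ℝ} (hg : g ≠ 0) : ∃ w : E, 0 < g w := by
  obtain ⟨w, hw⟩ : ∃ w : E, g w ≠ 0 := by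
    by_contra h
    push_neg at h
    exact hg (by ext w; simp [h w])
  rcases lt_or_gt_of_ne hw with h | h
  · exact ⟨-w, by simpa using h⟩
  · exact ⟨w, h⟩

/-- strict inequality at interior points of a set contained in a halfspace -/
lemma interior_lt_of_subset_halfspace {A : Set E} {g : (Fin d → ℝ) →L[ℝ] ℝ} {β : ℝ}
    (hg : g ≠ 0) (hA : A ⊆ {x | g x ≤ β}) {s : E} (hs : s ∈ interior A) : g s < β := by
  obtain ⟨w, hw⟩ := exists_pos_apply hg
  have hcont : Continuous fun t : ℝ => s + t • w := by continuity
  have h0 : (fun t : ℝ => s + t • w) 0 = s := by simp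
  have hnh : (fun t : ℝ => s + t • w) ⁻¹' interior A ∈ nhds (0:ℝ) :=
    hcont.continuousAt.preimage_mem_nhds (by simpa using isOpen_interior.mem_nhds hs)
  obtain ⟨ε, hε, hball⟩ := Metric.mem_nhds_iff.1 hnh
  have hmem : s + (ε/2) • w ∈ A := by
    apply interior_subset (hball ?_)
    simp only [Metric.mem_ball, Real.dist_eq, sub_zero]
    rw [abs_of_pos (by linarith)]
    linarith
  have h1 : g (s + (ε/2) • w) ≤ β := hA hmem
  simp only [map_add, map_smul, smul_eq_mul] at h1
  nlinarith

/-- separation of a point not in the interior from a closed convex set with nonempty interior -/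
lemma sep_point {L : Set E} (hcv : Convex ℝ L)
    (hne : (interior L).Nonempty) {s : E} (hs : s ∉ interior L) :
    ∃ f : (Fin d → ℝ) →L[ℝ] ℝ, f ≠ 0 ∧ ∀ x ∈ L, f x ≤ f s := by
  obtain ⟨f, hf⟩ := geometric_hahn_banach_open_point hcv.interior isOpen_interior hs
  obtain ⟨w, hw⟩ := hne
  refine ⟨f, ?_, ?_⟩
  · intro h
    rw [h] at hf
    simpa using hf w hw
  · intro x hx
    have hkey : ∀ t : ℝ, t ∈ Ioo (0:ℝ) 1 → f ((1-t) • x + t • w) < f s := by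
      intro t ht
      refine hf _ (hcv.combo_self_interior_mem_interior hx hw ?_ ht.1 (by ring))
      linarith [ht.2]
    have hcont : Continuous fun t : ℝ => f ((1-t) • x + t • w) :=
      f.continuous.comp (by continuity)
    have htend : Filter.Tendsto (fun t : ℝ => f ((1-t) • x + t • w))
        (nhdsWithin 0 (Ioo (0:ℝ) 1)) (nhds (f x)) := by
      have := hcont.tendsto 0
      simp only [sub_zero, one_smul, zero_smul, add_zero] at this
      exact this.mono_left nhdsWithin_le_nhds
    haveI : (nhdsWithin (0:ℝ) (Ioo (0:ℝ) 1)).NeBot := left_nhdsWithin_Ioo_neBot (by norm_num)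
    refine le_of_tendsto htend ?_
    filter_upwards [self_mem_nhdsWithin] with t ht using (hkey t ht).le

lemma lattice_inter_bounded_finite {C : Set E} (hC : Bornology.IsBounded C) :
    ({x : Fin d → ℝ | ∀ i, ∃ z : ℤ, x i = (z:ℝ)} ∩ C).Finite := by
  obtain ⟨R, hR⟩ := hC.subset_closedBall 0
  have hsub : ({x : Fin d → ℝ | ∀ i, ∃ z : ℤ, x i = (z:ℝ)} ∩ C) ⊆
      Set.pi univ (fun _ : Fin d => ((↑) : ℤ → ℝ) '' {z : ℤ | (z:ℝ) ∈ Icc (-R) R}) := by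
    rintro x ⟨hx1, hx2⟩ i _
    obtain ⟨z, hz⟩ := hx1 i
    refine ⟨z, ?_, hz.symm⟩
    have hb : ‖x‖ ≤ R := by simpa using hR hx2
    have : |x i| ≤ R := by
      calc |x i| = ‖x i‖ := rfl
        _ ≤ ‖x‖ := norm_le_pi_norm x i
        _ ≤ R := hb
    rw [hz] at this
    exact abs_le.1 this
  refine Set.Finite.subset (Set.Finite.pi fun i => ?_) hsub
  exact Set.Finite.image _ ((Set.finite_Icc (⌈-R⌉) ⌊R⌋).subset (by
    rintro z ⟨h1, h2⟩
    exact ⟨Int.ceil_le.2 h1, Int.le_floor.2 h2⟩))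

/-- a linear functional bounded above on F attaining the bound at a point of the intrinsic
interior is constant on F -/
lemma relint_flat {F : Set E} {f : (Fin d → ℝ) →L[ℝ] ℝ} {c : ℝ}
    (hFf : ∀ y ∈ F, f y ≤ c) {x : E} (hx : x ∈ intrinsicInterior ℝ F) (hfx : f x = c)
    {z : E} (hz : z ∈ F) : f z = c := by
  obtain ⟨y, hy, rfl⟩ := hx
  have hzsp : z ∈ affineSpan ℝ F := subset_affineSpan ℝ F hz
  -- the curve t ↦ y + t • (y - z) inside the affine span
  have hmem : ∀ t : ℝ, (↑y + t • (↑y - z) : E) ∈ affineSpan ℝ F := by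
    intro t
    have := AffineSubspace.smul_vsub_vadd_mem (affineSpan ℝ F) t y.2 hzsp y.2
    simpa [vsub_eq_sub, vadd_eq_add, add_comm] using this
  set γ : ℝ → (affineSpan ℝ F : Set E) := fun t => ⟨↑y + t • (↑y - z), hmem t⟩ with hγ
  have hγcont : Continuous γ := by
    apply Continuous.subtype_mk
    continuity
  have hγ0 : γ 0 = y := by
    apply Subtype.ext
    simp [hγ]
  have hnh : γ ⁻¹' interior (((↑) : (affineSpan ℝ F : Set E) → E) ⁻¹' F) ∈ nhds (0:ℝ) := by
    apply hγcont.continuousAt.preimage_mem_nhds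
    rw [hγ0]
    exact isOpen_interior.mem_nhds hy
  obtain ⟨ε, hε, hball⟩ := Metric.mem_nhds_iff.1 hnh
  have hmemF : (↑y + (ε/2) • (↑y - z) : E) ∈ F := by
    have : γ (ε/2) ∈ interior (((↑) : (affineSpan ℝ F : Set E) → E) ⁻¹' F) := by
      apply hball
      simp only [Metric.mem_ball, Real.dist_eq, sub_zero]
      rw [abs_of_pos (by linarith)]
      linarith
    exact (interior_subset this : γ (ε/2) ∈ Subtype.val ⁻¹' F)
  have h1 : f (↑y + (ε/2) • (↑y - z)) ≤ c := hFf _ hmemF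
  simp only [map_add, map_smul, map_sub, smul_eq_mul, hfx] at h1
  have h2 : f z ≤ c := hFf z hz
  nlinarith

/-- the affine span of a set of dimension `d-1` on which a nonzero functional is constant is
the whole hyperplane -/
lemma span_eq_hyperplane {F : Set E} {f : (Fin d → ℝ) →L[ℝ] ℝ} {c : ℝ}
    (hf : f ≠ 0) (hdim : adim F + 1 = d) (hne : F.Nonempty)
    (hsub : ∀ z ∈ F, f z = c) :
    ((affineSpan ℝ F : AffineSubspace ℝ E) : Set E) = {x | f x = c} := by
  obtain ⟨x₀, hx₀⟩ := hne
  have hfx₀ : f x₀ = c := hsub x₀ hx₀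
  set H : AffineSubspace ℝ E := AffineSubspace.mk' x₀ (LinearMap.ker (f : E →ₗ[ℝ] ℝ)) with hH
  have hHcar : (H : Set E) = {x | f x = c} := by
    ext y
    constructor
    · intro hy'
      obtain ⟨v, hv, rfl⟩ : ∃ v ∈ LinearMap.ker (f : E →ₗ[ℝ] ℝ), v +ᵥ x₀ = y :=
        ⟨y -ᵥ x₀, AffineSubspace.mem_mk'.1 hy', vsub_vadd y x₀⟩
      have : f v = 0 := hv
      simp only [mem_setOf_eq, vadd_eq_add]
      rw [map_add]
      rw [this, hfx₀]; ring
    · intro hy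
      refine AffineSubspace.mem_mk'.2 ?_
      have : f (y - x₀) = 0 := by rw [map_sub, hy, hfx₀]; ring
      exact this
  have hle : affineSpan ℝ F ≤ H := by
    rw [affineSpan_le, hHcar]
    intro z hz
    exact hsub z hz
  have hker : Module.finrank ℝ (LinearMap.ker (f : E →ₗ[ℝ] ℝ)) + 1 = d := by
    have hrank := LinearMap.finrank_range_add_finrank_ker (f : E →ₗ[ℝ] ℝ)
    have hsurj : LinearMap.range (f : E →ₗ[ℝ] ℝ) = ⊤ := by
      obtain ⟨w, hw⟩ := exists_pos_apply hf
      rw [LinearMap.range_eq_top]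
      intro r
      exact ⟨(r / f w) • w, by simp [div_mul_cancel₀, hw.ne']⟩
    rw [hsurj] at hrank
    simp only [finrank_top] at hrank
    have h1 : Module.finrank ℝ (Fin d → ℝ) = d := by
      simp [Module.finrank_pi]
    have h2 : Module.finrank ℝ ℝ = 1 := Module.finrank_self ℝ
    omega
  have hdir : (affineSpan ℝ F).direction = LinearMap.ker (f : E →ₗ[ℝ] ℝ) := by
    apply Submodule.eq_of_le_of_finrank_eq
    · have := AffineSubspace.direction_le hle
      rwa [hH, AffineSubspace.direction_mk'] at this
    · have h3 : adim F = Module.finrank ℝ (affineSpan ℝ F).direction := rfl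
      omega
  have heq : affineSpan ℝ F = H := by
    apply AffineSubspace.ext_of_direction_eq
    · rw [hdir, hH, AffineSubspace.direction_mk']
    · exact ⟨x₀, subset_affineSpan ℝ F hx₀, AffineSubspace.self_mem_mk' _ _⟩
  rw [heq, hHcar]

/-- an exposed face equals the intersection of the set with the affine span of the face -/
lemma exposed_eq_inter_span {L F : Set E} (hexp : IsExposed ℝ L F) (hne : F.Nonempty) :
    F = L ∩ ((affineSpan ℝ F : AffineSubspace ℝ E) : Set E) := by
  obtain ⟨l, hFl⟩ := hexp hne
  obtain ⟨x₀, hx₀⟩ := hne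
  have hx₀' := hx₀
  rw [hFl] at hx₀'
  obtain ⟨hx₀L, hx₀max⟩ := hx₀'
  -- the affine subspace {w | l w = l x₀} contains F
  set K : AffineSubspace ℝ E := AffineSubspace.mk' x₀ (LinearMap.ker (l : E →ₗ[ℝ] ℝ)) with hK
  have hKcar : (K : Set E) = {x | l x = l x₀} := by
    ext y
    constructor
    · intro hy'
      obtain ⟨v, hv, rfl⟩ : ∃ v ∈ LinearMap.ker (l : E →ₗ[ℝ] ℝ), v +ᵥ x₀ = y :=
        ⟨y -ᵥ x₀, AffineSubspace.mem_mk'.1 hy', vsub_vadd y x₀⟩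
      have : l v = 0 := hv
      simp only [mem_setOf_eq, vadd_eq_add, map_add]
      rw [this]; ring
    · intro hy
      exact AffineSubspace.mem_mk'.2 (by
        have : l (y - x₀) = 0 := by rw [map_sub, hy]; ring
        exact this)
  have hFK : affineSpan ℝ F ≤ K := by
    rw [affineSpan_le, hKcar]
    intro z hz
    rw [hFl] at hz
    exact le_antisymm (hx₀max z hz.1) (hz.2 x₀ hx₀L)
  apply Set.Subset.antisymm
  · intro z hz
    exact ⟨hexp.subset hz, subset_affineSpan ℝ F hz⟩
  · rintro z ⟨hzL, hzsp⟩
    have : l z = l x₀ := by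
      have h1 := hFK hzsp
      have h2 : z ∈ (K : Set E) := h1
      rw [hKcar] at h2
      exact h2
    rw [hFl]
    exact ⟨hzL, fun y hy => (hx₀max y hy).trans this.ge⟩

/-- two functionals with the same level hyperplane are proportional -/
lemma hyperplane_eq_prop {u l : (Fin d → ℝ) →L[ℝ] ℝ} {b c : ℝ} (hl : l ≠ 0)
    (hset : {x : Fin d → ℝ | u x = b} = {x | l x = c}) :
    ∃ lam : ℝ, (∀ x, u x = lam * l x) ∧ b = lam * c := by
  obtain ⟨w, hw⟩ := exists_pos_apply hl
  set v : E := (l w)⁻¹ • w with hv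
  have hlv : l v = 1 := by simp [hv, inv_mul_cancel₀ hw.ne']
  set x₀ : E := c • v with hx₀
  have hlx₀ : l x₀ = c := by simp [hx₀, hlv]
  have hux₀ : u x₀ = b := by
    have : x₀ ∈ {x : Fin d → ℝ | l x = c} := hlx₀
    rw [← hset] at this
    exact this
  have hker : ∀ y : E, l y = 0 → u y = 0 := by
    intro y hy
    have h1 : x₀ + y ∈ {x : Fin d → ℝ | l x = c} := by
      simp only [mem_setOf_eq, map_add, hy, hlx₀, add_zero]
    rw [← hset] at h1
    have : u x₀ + u y = b := by simpa [map_add] using h1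
    rw [hux₀] at this
    linarith
  refine ⟨u v, fun x => ?_, ?_⟩
  · have hdecomp : l (x - (l x) • v) = 0 := by simp [map_sub, hlv]
    have := hker _ hdecomp
    simp only [map_sub, map_smul, smul_eq_mul, hlv, mul_one] at this ⊢
    linarith
  · have : u x₀ = u v * c := by
      simp only [hx₀, map_smul, smul_eq_mul]
      ring
    rw [← hux₀, this]

end Helpers

set_option maxHeartbeats 2000000 in
theorem maxfree_bounded_int {d : ℕ} (C : Set (Fin d → ℝ))
    (hCbdd : Bornology.IsBounded C) (hCconv : Convex ℝ C)
    (S : Set (Fin d → ℝ)) (hS : S = {x : Fin d → ℝ | ∀ i, ∃ z : ℤ, x i = (z : ℝ)} ∩ C) :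
    ∀ L, IsMaxFree S L → FullDim L → IsPolyhedron L ∧ FacetsLE L (2 ^ d) := by
  classical
  intro L hL hfull
  obtain ⟨⟨hcl, hcv, hfree⟩, hmax⟩ := hL
  have hSfin : S.Finite := by rw [hS]; exact lattice_inter_bounded_finite hCbdd
  have hSC : S ⊆ C := by rw [hS]; exact inter_subset_right
  have hSnotint : ∀ s ∈ S, s ∉ interior L := by
    intro s hs hsint
    have hmem : s ∈ interior L ∩ S := ⟨hsint, hs⟩
    rw [hfree] at hmem
    exact hmem
  have hint : (interior L).Nonempty := by
    rw [hcv.interior_nonempty_iff_affineSpan_eq_top]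
    exact hfull
  have hsep : ∀ s ∈ S, ∃ f : (Fin d → ℝ) →L[ℝ] ℝ, f ≠ 0 ∧ ∀ x ∈ L, f x ≤ f s :=
    fun s hs => sep_point hcv hint (hSnotint s hs)
  choose! f hf0 hfle using hsep
  set P : Set (Fin d → ℝ) := {x | ∀ s ∈ S, f s x ≤ f s s} with hPdef
  have hLP : L ⊆ P := fun x hx s hs => hfle s hs x hx
  have hPclosed : IsClosed P := by
    have h : P = ⋂ s ∈ S, {x | f s x ≤ f s s} := by ext x; simp [hPdef]
    rw [h]
    exact isClosed_biInter fun s _ => isClosed_le (f s).continuous continuous_const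
  have hPconvex : Convex ℝ P := by
    intro x hx y hy a b ha hb hab
    intro s hs
    have h1 := hx s hs
    have h2 := hy s hs
    simp only [map_add, map_smul, smul_eq_mul]
    have key : a * f s s + b * f s s = f s s := by rw [← add_mul, hab, one_mul]
    nlinarith [mul_le_mul_of_nonneg_left h1 ha, mul_le_mul_of_nonneg_left h2 hb]
  have hPfree : IsFreeSet S P := by
    refine ⟨hPclosed, hPconvex, ?_⟩
    rw [eq_empty_iff_forall_notMem]
    rintro s ⟨hsint, hsS⟩
    exact lt_irrefl _ (interior_lt_of_subset_halfspace (hf0 s hsS)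
      (fun x (hx : x ∈ P) => hx s hsS) hsint)
  have hPL : P = L := hmax P hPfree hLP
  have hfinE : Module.finrank ℝ (Fin d → ℝ) = d := by simp [Module.finrank_pi]
  refine ⟨?_, ?_⟩
  · -- IsPolyhedron
    refine ⟨hSfin.toFinset.card,
      fun i => ((f ((hSfin.toFinset.equivFin.symm i) : Fin d → ℝ)) : (Fin d → ℝ) →ₗ[ℝ] ℝ),
      fun i => f ((hSfin.toFinset.equivFin.symm i) : Fin d → ℝ)
        ((hSfin.toFinset.equivFin.symm i) : Fin d → ℝ), ?_⟩
    rw [← hPL]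
    ext x
    simp only [hPdef, mem_setOf_eq, ContinuousLinearMap.coe_coe]
    constructor
    · intro h i
      exact h _ (hSfin.mem_toFinset.1 (hSfin.toFinset.equivFin.symm i).2)
    · intro h s hs
      have h2 := h (hSfin.toFinset.equivFin ⟨s, hSfin.mem_toFinset.2 hs⟩)
      simpa using h2
  · -- FacetsLE
    have hfacet_relint : ∀ F : Set (Fin d → ℝ), IsFacet L F →
        ∃ s ∈ S, s ∈ intrinsicInterior ℝ F := by
      intro F hF
      obtain ⟨hFne, hFexp, hFdim⟩ := hF
      by_contra hA
      push_neg at hA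
      obtain ⟨l, hFl⟩ := hFexp hFne
      have hFsubL : F ⊆ L := hFexp.subset
      have hl0 : l ≠ 0 := by
        intro h
        rw [h] at hFl
        have hFL : F = L := by rw [hFl]; ext x; simp
        rw [hFL] at hFdim
        have : adim L = d := by
          unfold adim
          rw [hfull, AffineSubspace.direction_top, finrank_top, hfinE]
        omega
      obtain ⟨x₀, hx₀ri⟩ := Set.Nonempty.intrinsicInterior (hFexp.convex hcv) hFne
      have hx₀F : x₀ ∈ F := intrinsicInterior_subset hx₀ri
      set c := l x₀ with hc
      have hlmax : ∀ y ∈ L, l y ≤ c := by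
        have h := hx₀F
        rw [hFl] at h
        exact h.2
      have hFc : ∀ z ∈ F, l z = c := by
        intro z hz
        have hz' := hz
        rw [hFl] at hz'
        exact le_antisymm (hlmax z (hFsubL hz)) (hz'.2 x₀ (hFsubL hx₀F))
      have hspan : ((affineSpan ℝ F : AffineSubspace ℝ (Fin d → ℝ)) : Set (Fin d → ℝ))
          = {x | l x = c} := span_eq_hyperplane hl0 hFdim hFne hFc
      set tA : (Fin d → ℝ) → Prop :=
        fun s => ∃ lam : ℝ, 0 < lam ∧ (∀ x, f s x = lam * l x) ∧ f s s = lam * c with htA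
      have hc1 : ∀ s ∈ S, ¬ tA s → f s x₀ < f s s := by
        intro s hs hnA
        rcases lt_or_eq_of_le (hfle s hs x₀ (hFsubL hx₀F)) with h | h
        · exact h
        exfalso
        have hflat : ∀ z ∈ F, f s z = f s s :=
          fun z hz => relint_flat (fun y hy => hfle s hs y (hFsubL hy)) hx₀ri h hz
        have hspan2 : ((affineSpan ℝ F : AffineSubspace ℝ (Fin d → ℝ)) : Set (Fin d → ℝ))
            = {x | f s x = f s s} := span_eq_hyperplane (hf0 s hs) hFdim hFne hflat
        have hseteq : {x : Fin d → ℝ | f s x = f s s} = {x | l x = c} := by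
          rw [← hspan2, hspan]
        obtain ⟨lam, hlam1, hlam2⟩ := hyperplane_eq_prop hl0 hseteq
        obtain ⟨w₀, hw₀⟩ := hint
        have hw₀lt : l w₀ < c :=
          interior_lt_of_subset_halfspace hl0 (fun y hy => hlmax y hy) hw₀
        have hwle : f s w₀ ≤ f s s := hfle s hs w₀ (interior_subset hw₀)
        rw [hlam1 w₀, hlam2] at hwle
        have hlampos : 0 < lam := by
          rcases lt_trichotomy lam 0 with hl' | hl' | hl'
          · nlinarith
          · exfalso
            apply hf0 s hs
            ext y
            have h3 := hlam1 y
            rw [hl'] at h3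
            simpa using h3
          · exact hl'
        exact hnA ⟨lam, hlampos, hlam1, hlam2⟩
      -- choose ε
      set Spos := hSfin.toFinset.filter (fun s => c < l s) with hSpos
      set ε : ℝ := if h : Spos.Nonempty then
          (Spos.image fun s => l s - c).min' (h.image _) else 1 with hε
      have hεpos : 0 < ε := by
        rw [hε]
        split_ifs with h
        · rcases Finset.mem_image.1 ((Spos.image fun s => l s - c).min'_mem (h.image _))
            with ⟨s, hsmem, hseq⟩
          rw [← hseq]
          rw [hSpos] at hsmem
          have h4 := (Finset.mem_filter.1 hsmem).2
          linarith
        · norm_num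
      have hε2 : ∀ s ∈ S, l s < c + ε → l s ≤ c := by
        intro s hs hlt
        by_contra h
        push_neg at h
        have hmem : s ∈ Spos := Finset.mem_filter.2 ⟨hSfin.mem_toFinset.2 hs, h⟩
        have hne' : Spos.Nonempty := ⟨s, hmem⟩
        have h5 : ε ≤ l s - c := by
          rw [hε, dif_pos hne']
          exact Finset.min'_le _ _ (Finset.mem_image_of_mem _ hmem)
        linarith
      -- direction vector
      obtain ⟨w, hw⟩ := exists_pos_apply hl0
      set v : Fin d → ℝ := (l w)⁻¹ • w with hv
      have hlv : l v = 1 := by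
        rw [hv]
        simp [inv_mul_cancel₀ hw.ne']
      -- choose δ
      set TB := hSfin.toFinset.filter (fun s => ¬ tA s) with hTB
      set δ : ℝ := (insert ε (TB.image fun s => (f s s - f s x₀) / (1 + |f s v|))).min'
        (Finset.insert_nonempty _ _) with hδ
      have hδpos : 0 < δ := by
        rw [hδ, Finset.lt_min'_iff]
        intro y hy
        rcases Finset.mem_insert.1 hy with rfl | hy
        · exact hεpos
        · rcases Finset.mem_image.1 hy with ⟨s, hsmem, rfl⟩
          rw [hTB] at hsmem
          have hs := Finset.mem_filter.1 hsmem
          have h6 := hc1 s (hSfin.mem_toFinset.1 hs.1) hs.2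
          have h7 : (0:ℝ) < 1 + |f s v| := by positivity
          apply div_pos (by linarith) h7
      have hδε : δ ≤ ε := Finset.min'_le _ _ (Finset.mem_insert_self _ _)
      have hδs : ∀ s ∈ S, ¬ tA s → δ ≤ (f s s - f s x₀) / (1 + |f s v|) := by
        intro s hs hnA
        exact Finset.min'_le _ _ (Finset.mem_insert_of_mem (Finset.mem_image_of_mem _
          (Finset.mem_filter.2 ⟨hSfin.mem_toFinset.2 hs, hnA⟩)))
      set x₁ := x₀ + δ • v with hx₁
      have hlx₁ : l x₁ = c + δ := by
        rw [hx₁, map_add, map_smul, smul_eq_mul, hlv, ← hc]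
        ring
      set L' : Set (Fin d → ℝ) := {x | l x ≤ c + ε ∧ ∀ s ∈ S, ¬ tA s → f s x ≤ f s s}
        with hL'
      have hLL' : L ⊆ L' := fun x hx =>
        ⟨(hlmax x hx).trans (by linarith), fun s hs _ => hfle s hs x hx⟩
      have hx₁L' : x₁ ∈ L' := by
        constructor
        · rw [hlx₁]; linarith
        · intro s hs hnA
          have h1 := hc1 s hs hnA
          have h2 := (hδs s hs hnA)
          have hden : (0:ℝ) < 1 + |f s v| := by positivity
          rw [le_div_iff₀ hden] at h2
          have habs : δ * f s v ≤ δ * |f s v| :=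
            mul_le_mul_of_nonneg_left (le_abs_self _) hδpos.le
          have h8 : f s x₁ = f s x₀ + δ * f s v := by
            rw [hx₁, map_add, map_smul, smul_eq_mul]
          rw [h8]
          nlinarith
      have hx₁L : x₁ ∉ L := by
        intro hmem
        have h9 := hlmax x₁ hmem
        rw [hlx₁] at h9
        linarith
      have hL'closed : IsClosed L' := by
        have h : L' = {x | l x ≤ c + ε} ∩ ⋂ s ∈ {s ∈ S | ¬ tA s}, {x | f s x ≤ f s s} := by
          ext x
          simp only [hL', mem_setOf_eq, mem_inter_iff, mem_iInter, mem_sep_iff]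
          tauto
        rw [h]
        exact (isClosed_le l.continuous continuous_const).inter
          (isClosed_biInter fun s _ => isClosed_le (f s).continuous continuous_const)
      have hL'convex : Convex ℝ L' := by
        intro x hx y hy a b ha hb hab
        constructor
        · simp only [map_add, map_smul, smul_eq_mul]
          have key : a * (c + ε) + b * (c + ε) = c + ε := by rw [← add_mul, hab, one_mul]
          nlinarith [mul_le_mul_of_nonneg_left hx.1 ha, mul_le_mul_of_nonneg_left hy.1 hb]
        · intro s hs hnA
          simp only [map_add, map_smul, smul_eq_mul]
          have key : a * f s s + b * f s s = f s s := by rw [← add_mul, hab, one_mul]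
          nlinarith [mul_le_mul_of_nonneg_left (hx.2 s hs hnA) ha,
            mul_le_mul_of_nonneg_left (hy.2 s hs hnA) hb]
      have hL'free : interior L' ∩ S = ∅ := by
        rw [eq_empty_iff_forall_notMem]
        rintro s ⟨hsint, hsS⟩
        have hstrict : ∀ t ∈ S, ¬ tA t → f t s < f t t := fun t ht hnA =>
          interior_lt_of_subset_halfspace (hf0 t ht)
            (fun x (hx : x ∈ L') => hx.2 t ht hnA) hsint
        have hls : l s < c + ε :=
          interior_lt_of_subset_halfspace hl0 (fun x (hx : x ∈ L') => hx.1) hsint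
        have hlsc : l s ≤ c := hε2 s hsS hls
        rcases lt_or_eq_of_le hlsc with hlt | heq
        · have hU : ∀ t ∈ S, f t s < f t t := by
            intro t ht
            by_cases htA : tA t
            · obtain ⟨lam, hlam, h1, h2⟩ := htA
              rw [h1, h2]
              nlinarith
            · exact hstrict t ht htA
          have hUopen : IsOpen {x : Fin d → ℝ | ∀ t ∈ S, f t x < f t t} := by
            have h : {x : Fin d → ℝ | ∀ t ∈ S, f t x < f t t}
                = ⋂ t ∈ S, {x | f t x < f t t} := by ext x; simp
            rw [h]
            exact hSfin.isOpen_biInter fun t _ =>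
              isOpen_lt (f t).continuous continuous_const
          have hsub : {x : Fin d → ℝ | ∀ t ∈ S, f t x < f t t} ⊆ L := by
            intro x hx
            rw [← hPL]
            exact fun t ht => (hx t ht).le
          exact hSnotint s hsS (interior_maximal hsub hUopen hU)
        · -- l s = c
          have hsL : s ∈ L := by
            rw [← hPL]
            intro t ht
            by_cases htA : tA t
            · obtain ⟨lam, hlam, h1, h2⟩ := htA
              rw [h1, heq, h2]
            · exact (hstrict t ht htA).le
          have hsF : s ∈ F := by
            rw [hFl]
            exact ⟨hsL, fun y hy => heq ▸ hlmax y hy⟩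
          refine hA s hsS ?_
          have hssp : s ∈ affineSpan ℝ F := by
            have h10 : s ∈ ((affineSpan ℝ F : AffineSubspace ℝ (Fin d → ℝ))
                : Set (Fin d → ℝ)) := by rw [hspan]; exact heq
            exact h10
          set U : Set (Fin d → ℝ) := {x | ∀ t ∈ S, ¬ tA t → f t x < f t t} with hU
          have hUopen : IsOpen U := by
            have h : U = ⋂ t ∈ {t ∈ S | ¬ tA t}, {x | f t x < f t t} := by
              ext x
              simp only [hU, mem_setOf_eq, mem_iInter, mem_sep_iff]
              tauto
            rw [h]
            exact (hSfin.subset (sep_subset _ _)).isOpen_biInter fun t _ =>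
              isOpen_lt (f t).continuous continuous_const
          have hsU : s ∈ U := fun t ht hnA => hstrict t ht hnA
          have hUF : ∀ x ∈ U, l x = c → x ∈ F := by
            intro x hx hxc
            have hxL : x ∈ L := by
              rw [← hPL]
              intro t ht
              by_cases htA : tA t
              · obtain ⟨lam, hlam, h1, h2⟩ := htA
                rw [h1, hxc, h2]
              · exact (hx t ht htA).le
            rw [hFl]
            exact ⟨hxL, fun y hy => hxc ▸ hlmax y hy⟩
          refine ⟨⟨s, hssp⟩, ?_, rfl⟩
          have hsub2 : (Subtype.val ⁻¹' U : Set (affineSpan ℝ F : Set (Fin d → ℝ)))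
              ⊆ Subtype.val ⁻¹' F := by
            intro y hy
            refine hUF _ hy ?_
            have h11 : (y : Fin d → ℝ) ∈ ((affineSpan ℝ F : AffineSubspace ℝ (Fin d → ℝ))
                : Set (Fin d → ℝ)) := y.2
            have h12 : (y : Fin d → ℝ) ∈ {x : Fin d → ℝ | l x = c} := by
              rw [← hspan]; exact h11
            exact h12
          exact interior_maximal hsub2 (hUopen.preimage continuous_subtype_val) hsU
      have hL'eq : L' = L := hmax L' ⟨hL'closed, hL'convex, hL'free⟩ hLL'
      rw [hL'eq] at hx₁L'
      exact hx₁L hx₁L'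
    -- integer coordinates
    have hSint : ∀ s ∈ S, ∀ i, ∃ z : ℤ, s i = (z : ℝ) := by
      intro s hs i
      rw [hS] at hs
      exact hs.1 i
    set zc : (Fin d → ℝ) → Fin d → ℤ := fun s i =>
      if h : ∃ z : ℤ, s i = (z : ℝ) then h.choose else 0 with hzc
    have hzc_spec : ∀ s ∈ S, ∀ i, s i = ((zc s i : ℤ) : ℝ) := by
      intro s hs i
      have h := hSint s hs i
      rw [hzc]
      simp only [dif_pos h]
      exact h.choose_spec
    have hchoice : ∀ F ∈ {F : Set (Fin d → ℝ) | IsFacet L F},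
        ∃ s, s ∈ S ∧ s ∈ intrinsicInterior ℝ F := by
      intro F hF
      obtain ⟨s, h1, h2⟩ := hfacet_relint F hF
      exact ⟨s, h1, h2⟩
    choose! sF hsFS hsFri using hchoice
    set Φ : Set (Fin d → ℝ) → (Fin d → ZMod 2) :=
      fun F i => ((zc (sF F) i : ℤ) : ZMod 2) with hΦ
    have hinj : InjOn Φ {F : Set (Fin d → ℝ) | IsFacet L F} := by
      intro F hF G hG hFG
      have hFfacet : IsFacet L F := hF
      have hGfacet : IsFacet L G := hG
      have hsF_S := hsFS F hF
      have hsG_S := hsFS G hG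
      have hsF_ri := hsFri F hF
      have hsG_ri := hsFri G hG
      set s := sF F with hsdef
      set t := sF G with htdef
      set m : Fin d → ℝ := (1/2 : ℝ) • (s + t) with hm
      have hmS : m ∈ S := by
        rw [hS]
        constructor
        · intro i
          have hpar : ((zc s i : ℤ) : ZMod 2) = ((zc t i : ℤ) : ZMod 2) := congrFun hFG i
          have hzero : ((zc s i - zc t i : ℤ) : ZMod 2) = 0 := by
            push_cast
            rw [hpar]
            ring
          obtain ⟨k, hk⟩ := (ZMod.intCast_zmod_eq_zero_iff_dvd _ 2).1 hzero
          refine ⟨zc t i + k, ?_⟩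
          have h1 : s i = ((zc s i : ℤ) : ℝ) := hzc_spec s hsF_S i
          have h2 : t i = ((zc t i : ℤ) : ℝ) := hzc_spec t hsG_S i
          have h3 : zc s i = zc t i + 2*k := by omega
          rw [hm]
          simp only [Pi.smul_apply, Pi.add_apply, smul_eq_mul]
          rw [h1, h2, h3]
          push_cast
          ring
        · have hmeq : m = (1/2 : ℝ) • s + (1/2 : ℝ) • t := by
            rw [hm, smul_add]
          rw [hmeq]
          exact hCconv (hSC hsF_S) (hSC hsG_S) (by norm_num) (by norm_num) (by norm_num)
      have hmnotint : m ∉ interior L := hSnotint m hmS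
      obtain ⟨g, hg0, hgle⟩ := sep_point hcv hint hmnotint
      have hsFL : s ∈ L := hFfacet.2.1.subset (intrinsicInterior_subset hsF_ri)
      have htGL : t ∈ L := hGfacet.2.1.subset (intrinsicInterior_subset hsG_ri)
      have hgs : g s ≤ g m := hgle s hsFL
      have hgt : g t ≤ g m := hgle t htGL
      have hgm : g m = (1/2) * (g s + g t) := by
        rw [hm, map_smul, map_add, smul_eq_mul]
      have hgseq : g s = g m := by linarith
      have hgteq : g t = g m := by linarith
      have hFflat : ∀ z ∈ F, g z = g m :=
        fun z hz => relint_flat (fun y hy => hgle y (hFfacet.2.1.subset hy)) hsF_ri hgseq hz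
      have hGflat : ∀ z ∈ G, g z = g m :=
        fun z hz => relint_flat (fun y hy => hgle y (hGfacet.2.1.subset hy)) hsG_ri hgteq hz
      have hspanF := span_eq_hyperplane hg0 hFfacet.2.2 hFfacet.1 hFflat
      have hspanG := span_eq_hyperplane hg0 hGfacet.2.2 hGfacet.1 hGflat
      rw [exposed_eq_inter_span hFfacet.2.1 hFfacet.1,
        exposed_eq_inter_span hGfacet.2.1 hGfacet.1, hspanF, hspanG]
    unfold FacetsLE
    calc {F : Set (Fin d → ℝ) | IsFacet L F}.encard
        = (Φ '' {F : Set (Fin d → ℝ) | IsFacet L F}).encard := hinj.encard_image.symm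
      _ ≤ (univ : Set (Fin d → ZMod 2)).encard := encard_le_encard (subset_univ _)
      _ = ((2 ^ d : ℕ) : ℕ∞) := by
          rw [encard_univ]
          rw [ENat.card_eq_coe_fintype_card]
          norm_num
end
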